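/- arXiv:math/0305103 — 5 statements merged into one kernel-verified Lean document; each statement's English description precedes it below -/
import Mathlib

section
/- Let q be a nonzero complex number and for z ∈ ℂ with 1 − q²z ≠ 0 define b(z) = (1−z)q/(1−q²z), c(z) = (1−q²)/(1−q²z), and the 4×4 complex matrix R̂(z) with rows (1,0,0,0), (0, z·c(z), b(z), 0), (0, b(z), c(z), 0), (0,0,0,1). Then for all z, z′ ∈ ℂ such that 1 − q²z ≠ 0, 1 − q²z′ ≠ 0, and 1 − q²zz′ ≠ 0, the Baxterized braid equation holds: R̂₁₂(z)·R̂₂₃(z·z′)·R̂₁₂(z′) = R̂₂₃(z′)·R̂₁₂(z·z′)·R̂₂₃(z). -/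
open Matrix Kronecker

/-- Order-preserving encoding of `Fin 2 × Fin 2` into `Fin 4`, corresponding to the
basis order `e₁⊗e₁, e₁⊗e₂, e₂⊗e₁, e₂⊗e₂`. -/
noncomputable def enc4 : Fin 2 × Fin 2 → Fin 4 := fun p => ![![0, 1], ![2, 3]] p.1 p.2

/-- View a `4×4` matrix as a matrix on `ℂ² ⊗ ℂ²`. -/
noncomputable def toT (A : Matrix (Fin 4) (Fin 4) ℂ) :
    Matrix (Fin 2 × Fin 2) (Fin 2 × Fin 2) ℂ := A.submatrix enc4 enc4

/-- `A₁₂ = A ⊗ I₂`, acting on the first two factors of `ℂ²⊗ℂ²⊗ℂ²`. -/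
noncomputable def op12 (A : Matrix (Fin 4) (Fin 4) ℂ) :
    Matrix (Fin 2 × Fin 2 × Fin 2) (Fin 2 × Fin 2 × Fin 2) ℂ :=
  Matrix.reindex (Equiv.prodAssoc (Fin 2) (Fin 2) (Fin 2))
    (Equiv.prodAssoc (Fin 2) (Fin 2) (Fin 2))
    (toT A ⊗ₖ (1 : Matrix (Fin 2) (Fin 2) ℂ))

/-- `A₂₃ = I₂ ⊗ A`, acting on the last two factors of `ℂ²⊗ℂ²⊗ℂ²`. -/
noncomputable def op23 (A : Matrix (Fin 4) (Fin 4) ℂ) :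
    Matrix (Fin 2 × Fin 2 × Fin 2) (Fin 2 × Fin 2 × Fin 2) ℂ :=
  (1 : Matrix (Fin 2) (Fin 2) ℂ) ⊗ₖ toT A

/-- The Baxterized braid matrix of `U_q(ŝl₂)`, with
`b(z) = (1-z)q/(1-q²z)` and `c(z) = (1-q²)/(1-q²z)`. -/
noncomputable def Rsl2 (q z : ℂ) : Matrix (Fin 4) (Fin 4) ℂ :=
  !![1, 0, 0, 0;
     0, z * ((1 - q ^ 2) / (1 - q ^ 2 * z)), (1 - z) * q / (1 - q ^ 2 * z), 0;
     0, (1 - z) * q / (1 - q ^ 2 * z), (1 - q ^ 2) / (1 - q ^ 2 * z), 0;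
     0, 0, 0, 1]

/-!
`R̂(z) = (1 - q²z)⁻¹ ((1 - z) R̂ + z (1 - q²))`, where `R̂ = R̂(0)` is Jimbo's constant braid
matrix; it satisfies the braid relation `R̂₁₂ R̂₂₃ R̂₁₂ = R̂₂₃ R̂₁₂ R̂₂₃` and the Hecke relation
`R̂² = (1 - q²) R̂ + q²`. This is Jones' Baxterization: for any two elements `X`, `Y` of an
algebra that satisfy the braid relation and the same quadratic relation, the pencils
`(1 - z) X + z a` satisfy the braid equation with spectral parameter, since after expanding
both sides they differ only by multiples of `XYX - YXY` and of `X² - Y² - a (X - Y)`.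
Since `A ↦ A₁₂` and `A ↦ A₂₃` are algebra homomorphisms, this applies to `X = R̂₁₂`, `Y = R̂₂₃`.
-/

section Baxterize

variable {R A : Type*} [CommRing R] [Ring A] [Algebra R A]

def baxterize (a : R) (T : A) (z : R) : A := (1 - z) • T + (z * a) • 1

theorem baxterize_braid {a b : R} {X Y : A} (hX : X * X = a • X + b • 1)
    (hY : Y * Y = a • Y + b • 1) (hXY : X * Y * X = Y * X * Y) (z z' : R) :
    baxterize a X z * baxterize a Y (z * z') * baxterize a X z' =
      baxterize a Y z' * baxterize a X (z * z') * baxterize a Y z := by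
  rw [mul_assoc, mul_assoc] at hXY
  simp only [baxterize, add_mul, mul_add, smul_mul_assoc, mul_smul_comm, one_mul, mul_one,
    mul_assoc, hXY, hX, hY]
  module

theorem AlgHom.map_baxterize {B : Type*} [Ring B] [Algebra R B] (f : A →ₐ[R] B) (a : R) (T : A)
    (z : R) : f (baxterize a T z) = baxterize a (f T) z := by
  simp [baxterize]

end Baxterize

section Kronecker

variable (R m n : Type*) [CommSemiring R] [Fintype m] [DecidableEq m] [Fintype n] [DecidableEq n]

def Matrix.kroneckerOneAlgHom : Matrix m m R →ₐ[R] Matrix (m × n) (m × n) R :=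
  AlgHom.ofLinearMap
    { toFun A := A ⊗ₖ (1 : Matrix n n R)
      map_add' A B := add_kronecker A B 1
      map_smul' c A := smul_kronecker c A 1 }
    one_kronecker_one fun A B => by
      simpa using mul_kronecker_mul A B (1 : Matrix n n R) 1

def Matrix.oneKroneckerAlgHom : Matrix n n R →ₐ[R] Matrix (m × n) (m × n) R :=
  AlgHom.ofLinearMap
    { toFun A := (1 : Matrix m m R) ⊗ₖ A
      map_add' A B := kronecker_add 1 A B
      map_smul' c A := kronecker_smul c 1 A }
    one_kronecker_one fun A B => by
      simpa using mul_kronecker_mul (1 : Matrix m m R) 1 A B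

end Kronecker

noncomputable def enc4Equiv : Fin 2 × Fin 2 ≃ Fin 4 where
  toFun := enc4
  invFun := ![(0, 0), (0, 1), (1, 0), (1, 1)]
  left_inv := by decide
  right_inv := by decide

noncomputable def op12AlgHom :
    Matrix (Fin 4) (Fin 4) ℂ →ₐ[ℂ] Matrix (Fin 2 × Fin 2 × Fin 2) (Fin 2 × Fin 2 × Fin 2) ℂ :=
  ((reindexAlgEquiv ℂ ℂ (Equiv.prodAssoc (Fin 2) (Fin 2) (Fin 2))).toAlgHom.comp
    (kroneckerOneAlgHom ℂ (Fin 2 × Fin 2) (Fin 2))).comp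
    (reindexAlgEquiv ℂ ℂ enc4Equiv.symm).toAlgHom

theorem op12AlgHom_apply (A : Matrix (Fin 4) (Fin 4) ℂ) : op12AlgHom A = op12 A := rfl

noncomputable def op23AlgHom :
    Matrix (Fin 4) (Fin 4) ℂ →ₐ[ℂ] Matrix (Fin 2 × Fin 2 × Fin 2) (Fin 2 × Fin 2 × Fin 2) ℂ :=
  (oneKroneckerAlgHom ℂ (Fin 2) (Fin 2 × Fin 2)).comp (reindexAlgEquiv ℂ ℂ enc4Equiv.symm).toAlgHom

theorem op23AlgHom_apply (A : Matrix (Fin 4) (Fin 4) ℂ) : op23AlgHom A = op23 A := rfl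

noncomputable def braidSl2 (q : ℂ) : Matrix (Fin 4) (Fin 4) ℂ :=
  !![1, 0, 0, 0;
     0, 0, q, 0;
     0, q, 1 - q ^ 2, 0;
     0, 0, 0, 1]

theorem braidSl2_mul_self (q : ℂ) :
    braidSl2 q * braidSl2 q = (1 - q ^ 2) • braidSl2 q + q ^ 2 • 1 := by
  ext i j
  fin_cases i <;> fin_cases j <;> simp [braidSl2, Matrix.mul_apply, Fin.sum_univ_four] <;> ring

theorem map_braidSl2_mul_self {B : Type*} [Ring B] [Algebra ℂ B]
    (f : Matrix (Fin 4) (Fin 4) ℂ →ₐ[ℂ] B) (q : ℂ) :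
    f (braidSl2 q) * f (braidSl2 q) = (1 - q ^ 2) • f (braidSl2 q) + q ^ 2 • 1 := by
  rw [← map_mul, braidSl2_mul_self, map_add, map_smul, map_smul, map_one]

theorem toT_braidSl2_apply (q : ℂ) (i j k l : Fin 2) :
    toT (braidSl2 q) (i, j) (k, l) =
      (if i = l ∧ j = k then if i = j then 1 else q else 0) +
        if i = k ∧ j = l ∧ j < i then 1 - q ^ 2 else 0 := by
  fin_cases i <;> fin_cases j <;> fin_cases k <;> fin_cases l <;>
    simp [toT, enc4, braidSl2, Matrix.cons_val]

theorem op12_mul_op23_mul_op12_braidSl2 (q : ℂ) :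
    op12 (braidSl2 q) * op23 (braidSl2 q) * op12 (braidSl2 q) =
      op23 (braidSl2 q) * op12 (braidSl2 q) * op23 (braidSl2 q) := by
  ext ⟨i, j, k⟩ ⟨i', j', k'⟩
  simp only [op12, op23, Matrix.mul_apply, Matrix.reindex_apply, Matrix.submatrix_apply,
    Matrix.kroneckerMap_apply, Fintype.sum_prod_type, Fin.sum_univ_two, Equiv.prodAssoc,
    Equiv.coe_fn_symm_mk, Matrix.one_apply, toT_braidSl2_apply]
  fin_cases i <;> fin_cases j <;> fin_cases k <;> fin_cases i' <;> fin_cases j' <;> fin_cases k' <;>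
    simp <;> ring

theorem Rsl2_eq_smul_baxterize {q z : ℂ} (h : 1 - q ^ 2 * z ≠ 0) :
    Rsl2 q z = (1 - q ^ 2 * z)⁻¹ • baxterize (1 - q ^ 2) (braidSl2 q) z := by
  ext i j
  fin_cases i <;> fin_cases j <;> simp [Rsl2, braidSl2, baxterize] <;> field_simp <;> ring

theorem uq_sl2_braid_equation_general (q : ℂ) (z z' : ℂ)
    (h1 : 1 - q ^ 2 * z ≠ 0) (h2 : 1 - q ^ 2 * z' ≠ 0) (h3 : 1 - q ^ 2 * (z * z') ≠ 0) :
    op12 (Rsl2 q z) * op23 (Rsl2 q (z * z')) * op12 (Rsl2 q z') =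
      op23 (Rsl2 q z') * op12 (Rsl2 q (z * z')) * op23 (Rsl2 q z) := by
  have braid := op12_mul_op23_mul_op12_braidSl2 q
  simp only [← op12AlgHom_apply, ← op23AlgHom_apply] at braid ⊢
  rw [Rsl2_eq_smul_baxterize h1, Rsl2_eq_smul_baxterize h2, Rsl2_eq_smul_baxterize h3]
  simp only [map_smul, AlgHom.map_baxterize, smul_mul_smul_comm]
  rw [baxterize_braid (map_braidSl2_mul_self _ q) (map_braidSl2_mul_self _ q) braid]
  congr 1
  ring

/-- the Baxterized braid equation for the `U_q(ŝl₂)` braid matrix with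
multiplicative spectral parameter. -/
theorem uq_sl2_braid_equation (q : ℂ) (hq : q ≠ 0) (z z' : ℂ)
    (h1 : 1 - q ^ 2 * z ≠ 0) (h2 : 1 - q ^ 2 * z' ≠ 0) (h3 : 1 - q ^ 2 * (z * z') ≠ 0) :
    op12 (Rsl2 q z) * op23 (Rsl2 q (z * z')) * op12 (Rsl2 q z') =
      op23 (Rsl2 q z') * op12 (Rsl2 q (z * z')) * op23 (Rsl2 q z) :=
  uq_sl2_braid_equation_general q z z' h1 h2 h3
end

section
/- Let q be a complex number with q ≠ 0 and q + q⁻¹ ≠ 0. Define the 4×4 matrices P₀ = E₁₁ + E₄₄, P₊ = (q+q⁻¹)⁻¹·(q·E₂₂ + E₂₃ + E₃₂ + q⁻¹·E₃₃), and P₋ = (q+q⁻¹)⁻¹·(q⁻¹·E₂₂ − E₂₃ − E₃₂ + q·E₃₃). Then (a) P₀, P₊, P₋ are mutually orthogonal projectors summing to the identity: P_a·P_b = 0 for a ≠ b, P_a² = P_a, and P₀ + P₊ + P₋ = I₄; and (b) for every z ∈ ℂ with 1 − q²z ≠ 0 and q²z − 1 ≠ 0, the matrix R̂(z) with rows (1,0,0,0),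 (0, z·c(z), b(z), 0), (0, b(z), c(z), 0), (0,0,0,1), where b(z) = (1−z)q/(1−q²z) and c(z) = (1−q²)/(1−q²z), admits the spectral resolution R̂(z) = P₀ + P₊ + ((q² − z)/(q²z − 1))·P₋. -/
/-- `P₀ = E₁₁ + E₄₄`. -/
noncomputable def P0u : Matrix (Fin 4) (Fin 4) ℂ :=
  !![1, 0, 0, 0; 0, 0, 0, 0; 0, 0, 0, 0; 0, 0, 0, 1]

/-- `P₊ = (q+q⁻¹)⁻¹ (q E₂₂ + E₂₃ + E₃₂ + q⁻¹ E₃₃)`. -/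
noncomputable def Ppu (q : ℂ) : Matrix (Fin 4) (Fin 4) ℂ :=
  (q + q⁻¹)⁻¹ • !![0, 0, 0, 0; 0, q, 1, 0; 0, 1, q⁻¹, 0; 0, 0, 0, 0]

/-- `P₋ = (q+q⁻¹)⁻¹ (q⁻¹ E₂₂ - E₂₃ - E₃₂ + q E₃₃)`. -/
noncomputable def Pmu (q : ℂ) : Matrix (Fin 4) (Fin 4) ℂ :=
  (q + q⁻¹)⁻¹ • !![0, 0, 0, 0; 0, q⁻¹, -1, 0; 0, -1, q, 0; 0, 0, 0, 0]

/-- The Baxterized braid matrix of `U_q(ŝl₂)`, with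
`b(z) = (1-z)q/(1-q²z)` and `c(z) = (1-q²)/(1-q²z)`. -/
noncomputable def Ruq (q z : ℂ) : Matrix (Fin 4) (Fin 4) ℂ :=
  !![1, 0, 0, 0;
     0, z * ((1 - q ^ 2) / (1 - q ^ 2 * z)), (1 - z) * q / (1 - q ^ 2 * z), 0;
     0, (1 - z) * q / (1 - q ^ 2 * z), (1 - q ^ 2) / (1 - q ^ 2 * z), 0;
     0, 0, 0, 1]

/-!
The matrices `P₊` and `P₋` are rank one, `P₊ = u₊ v₊ᵀ` and `P₋ = u₋ v₋ᵀ`, where the normalisation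
`(q + q⁻¹)⁻¹` makes `v₊ᵀ u₊ = v₋ᵀ u₋ = 1` while the cross pairings `v₊ᵀ u₋`, `v₋ᵀ u₊` are
`± (1 - q q⁻¹) = 0`. Hence `P₊`, `P₋` are orthogonal idempotents, and `P₀ = 1 - P₊ - P₋`
completes them. Finally `R̂(z) - 1` is supported on the middle block and is a multiple of `P₋`:
with `λ = (q² - z)/(q² z - 1)` it equals `(λ - 1) P₋`, so `R̂(z) = P₀ + P₊ + λ P₋`.
-/

open Matrix

theorem add_inv_eq_one_add_sq_div {K : Type*} [Field K] {q : K} (hq : q ≠ 0) :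
    q + q⁻¹ = (1 + q ^ 2) / q := by
  field_simp
  ring

theorem one_add_sq_ne_zero_of_add_inv_ne_zero {K : Type*} [Field K] {q : K} (hq : q ≠ 0)
    (hqq : q + q⁻¹ ≠ 0) : 1 + q ^ 2 ≠ 0 := by
  rintro h
  exact hqq (by rw [add_inv_eq_one_add_sq_div hq, h, zero_div])

theorem completeOrthogonalIdempotents_one_sub_sub {R : Type*} [Ring R] {e f : R}
    (he : IsIdempotentElem e) (hf : IsIdempotentElem f) (hef : e * f = 0) (hfe : f * e = 0) :
    CompleteOrthogonalIdempotents ![1 - e - f, e, f] := by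
  have hpair : OrthogonalIdempotents ![e, f] :=
    ⟨Fin.forall_fin_two.mpr ⟨he, hf⟩, by simp [Pairwise, Fin.forall_fin_two, hef, hfe]⟩
  convert (CompleteOrthogonalIdempotents.equiv (finSuccEquiv 2)).mpr
    (CompleteOrthogonalIdempotents.option hpair) using 1
  ext i
  fin_cases i
  · simp [sub_sub]
  · rfl
  · rfl

section RankOne
variable {n α : Type*} [Fintype n] [CommSemiring α] {u v w x : n → α}

theorem isIdempotentElem_vecMulVec (h : v ⬝ᵥ u = 1) : IsIdempotentElem (vecMulVec u v) := by
  rw [IsIdempotentElem, vecMulVec_mul_vecMulVec, h, one_smul]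

theorem vecMulVec_mul_vecMulVec_of_dotProduct_eq_zero (h : v ⬝ᵥ w = 0) :
    vecMulVec u v * vecMulVec w x = 0 := by
  rw [vecMulVec_mul_vecMulVec, h, zero_smul, vecMulVec_zero]

end RankOne

variable {q : ℂ}

theorem Ppu_eq_vecMulVec (hq : q ≠ 0) :
    Ppu q = vecMulVec ![0, q, 1, 0] ((q + q⁻¹)⁻¹ • ![0, 1, q⁻¹, 0]) := by
  ext i j
  fin_cases i <;> fin_cases j <;> simp [Ppu, vecMulVec_apply] <;> field_simp

theorem Pmu_eq_vecMulVec (hq : q ≠ 0) :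
    Pmu q = vecMulVec ![0, 1, -q, 0] ((q + q⁻¹)⁻¹ • ![0, q⁻¹, -1, 0]) := by
  ext i j
  fin_cases i <;> fin_cases j <;> simp [Pmu, vecMulVec_apply] <;> field_simp

theorem P0u_eq_one_sub_Ppu_sub_Pmu (hq : q ≠ 0) (hqq : q + q⁻¹ ≠ 0) :
    P0u = 1 - Ppu q - Pmu q := by
  have := one_add_sq_ne_zero_of_add_inv_ne_zero hq hqq
  ext i j
  fin_cases i <;> fin_cases j <;> simp [P0u, Ppu, Pmu, one_apply, add_inv_eq_one_add_sq_div hq] <;>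
    field_simp <;> ring

theorem Ruq_eq_one_add_smul_Pmu (hq : q ≠ 0) (hqq : q + q⁻¹ ≠ 0) {z : ℂ}
    (hz : 1 - q ^ 2 * z ≠ 0) :
    Ruq q z = 1 + ((q ^ 2 - z) / (q ^ 2 * z - 1) - 1) • Pmu q := by
  have hz' : q ^ 2 * z - 1 ≠ 0 := by contrapose! hz; linear_combination -hz
  have hscalar : ((q ^ 2 - z) / (q ^ 2 * z - 1) - 1) * (q + q⁻¹)⁻¹ =
      q * (z - 1) / (1 - q ^ 2 * z) := by
    rw [add_inv_eq_one_add_sq_div hq, inv_div]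
    field_simp [one_add_sq_ne_zero_of_add_inv_ne_zero hq hqq]
    ring
  rw [Pmu, smul_smul, hscalar]
  have hz'' : 1 - z * q ^ 2 ≠ 0 := by rwa [mul_comm]
  ext i j
  fin_cases i <;> fin_cases j <;> simp [Ruq, one_apply] <;> field_simp <;> ring

theorem completeOrthogonalIdempotents_P0u_Ppu_Pmu (hq : q ≠ 0) (hqq : q + q⁻¹ ≠ 0) :
    CompleteOrthogonalIdempotents ![P0u, Ppu q, Pmu q] := by
  rw [P0u_eq_one_sub_Ppu_sub_Pmu hq hqq, Ppu_eq_vecMulVec hq, Pmu_eq_vecMulVec hq]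
  refine completeOrthogonalIdempotents_one_sub_sub (isIdempotentElem_vecMulVec ?_)
    (isIdempotentElem_vecMulVec ?_) (vecMulVec_mul_vecMulVec_of_dotProduct_eq_zero ?_)
    (vecMulVec_mul_vecMulVec_of_dotProduct_eq_zero ?_) <;>
    simp [dotProduct, Fin.sum_univ_four, ← mul_add, add_comm q⁻¹, hq, hqq]

/-- `P₀, P₊, P₋` are mutually orthogonal projectors summing to the
identity, and `R̂(z) = P₀ + P₊ + ((q²-z)/(q²z-1)) P₋`. -/
theorem uq_sl2_spectral_resolution (q : ℂ) (hq : q ≠ 0) (hqq : q + q⁻¹ ≠ 0) :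
    (P0u * P0u = P0u ∧ Ppu q * Ppu q = Ppu q ∧ Pmu q * Pmu q = Pmu q ∧
     P0u * Ppu q = 0 ∧ Ppu q * P0u = 0 ∧
     P0u * Pmu q = 0 ∧ Pmu q * P0u = 0 ∧
     Ppu q * Pmu q = 0 ∧ Pmu q * Ppu q = 0 ∧
     P0u + Ppu q + Pmu q = 1) ∧
    (∀ z : ℂ, 1 - q ^ 2 * z ≠ 0 → q ^ 2 * z - 1 ≠ 0 →
      Ruq q z = P0u + Ppu q + ((q ^ 2 - z) / (q ^ 2 * z - 1)) • Pmu q) := by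
  have h := completeOrthogonalIdempotents_P0u_Ppu_Pmu hq hqq
  have hsum : P0u + Ppu q + Pmu q = 1 := by simpa [Fin.sum_univ_three] using h.complete
  refine ⟨⟨h.idem 0, h.idem 1, h.idem 2, h.ortho (by decide : (0 : Fin 3) ≠ 1),
    h.ortho (by decide : (1 : Fin 3) ≠ 0), h.ortho (by decide : (0 : Fin 3) ≠ 2),
    h.ortho (by decide : (2 : Fin 3) ≠ 0), h.ortho (by decide : (1 : Fin 3) ≠ 2),
    h.ortho (by decide : (2 : Fin 3) ≠ 1), hsum⟩, fun z hz _ ↦ ?_⟩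
  rw [Ruq_eq_one_add_smul_Pmu hq hqq hz, ← hsum, sub_smul, one_smul]
  abel
end

section
/- Let R̂ be the 4×4 complex matrix with rows (1,0,0,1), (0,1,−1,0), (0,1,1,0), (−1,0,0,1), so that R̂⁻¹ = I − ½R̂ (since R̂² − 2R̂ + 2I = 0). For real z > 0 define R̂(z) = (z² + z⁻²)^{−1/2}·((√2·z)⁻¹·R̂ + √2·z·R̂⁻¹). Then for every real z > 0 one has R̂(z⁻¹)·R̂(z) = I. -/
/-- The braid matrix of the exotic case `S03`. -/
noncomputable def S03 : Matrix (Fin 4) (Fin 4) ℂ :=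
  !![1, 0, 0, 1; 0, 1, -1, 0; 0, 1, 1, 0; -1, 0, 0, 1]

/-- The explicitly real Baxterized form
`R̂(z) = (z² + z⁻²)^{-1/2} ((√2 z)⁻¹ R̂ + √2 z R̂⁻¹)` for real `z > 0`. -/
noncomputable def S03z (z : ℝ) : Matrix (Fin 4) (Fin 4) ℂ :=
  ((Real.sqrt (z ^ 2 + (z⁻¹) ^ 2) : ℂ))⁻¹ •
    (((Real.sqrt 2 * z : ℝ) : ℂ)⁻¹ • S03 + ((Real.sqrt 2 * z : ℝ) : ℂ) • S03⁻¹)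

/-! The relation `R̂² = 2R̂ - 2` gives `R̂⁻¹ = 1 - R̂/2` and `R̂⁻² = -R̂²/4`. Expanding
`(b⁻¹R̂ + bR̂⁻¹)(a⁻¹R̂ + aR̂⁻¹)` with `ab = 2`, the `R̂²` and `R̂⁻²` terms cancel and the cross terms
leave `(a/b + b/a) • 1`; for `a = √2 z`, `b = √2 z⁻¹` this is `(z² + z⁻²) • 1`, which the
normalising factor `(z² + z⁻²)^{-1/2}` applied twice cancels. -/

section QuadraticRelation

variable {𝕜 A : Type*} [Field 𝕜] [NeZero (2 : 𝕜)] [Ring A] [Algebra 𝕜 A] {r : A}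

theorem mul_one_sub_half_smul (hr : r * r = (2 : 𝕜) • r - (2 : 𝕜) • 1) :
    r * (1 - (2 : 𝕜)⁻¹ • r) = 1 := by
  rw [mul_sub, mul_one, mul_smul_comm, hr, smul_sub, smul_smul, smul_smul,
    inv_mul_cancel₀ two_ne_zero, one_smul, one_smul, sub_sub_cancel]

theorem one_sub_half_smul_mul (hr : r * r = (2 : 𝕜) • r - (2 : 𝕜) • 1) :
    (1 - (2 : 𝕜)⁻¹ • r) * r = 1 := by
  rw [sub_mul, one_mul, smul_mul_assoc, hr, smul_sub, smul_smul, smul_smul,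
    inv_mul_cancel₀ two_ne_zero, one_smul, one_smul, sub_sub_cancel]

theorem one_sub_half_smul_mul_self (hr : r * r = (2 : 𝕜) • r - (2 : 𝕜) • 1) :
    (1 - (2 : 𝕜)⁻¹ • r) * (1 - (2 : 𝕜)⁻¹ • r) = -(4 : 𝕜)⁻¹ • (r * r) := by
  have h4 : (4 : 𝕜) ≠ 0 := by
    rw [show (4 : 𝕜) = 2 * 2 by norm_num]
    exact mul_ne_zero two_ne_zero two_ne_zero
  simp only [sub_mul, mul_sub, one_mul, mul_one, smul_mul_smul_comm, hr]
  match_scalars <;> field_simp <;> ring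

/-- `1 - 2⁻¹ • r` is the inverse of `r`, so the factors are Baxterizations `a⁻¹ r + a r⁻¹`. -/
theorem baxterize_mul_baxterize (hr : r * r = (2 : 𝕜) • r - (2 : 𝕜) • 1)
    {a b : 𝕜} (hab : b * a = 2) :
    (b⁻¹ • r + b • (1 - (2 : 𝕜)⁻¹ • r)) * (a⁻¹ • r + a • (1 - (2 : 𝕜)⁻¹ • r)) =
      (a / b + b / a) • 1 := by
  simp only [add_mul, mul_add, smul_mul_smul_comm, mul_one_sub_half_smul hr,
    one_sub_half_smul_mul hr, one_sub_half_smul_mul_self hr, smul_smul]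
  match_scalars
  · rw [← mul_inv, hab, show (4 : 𝕜) = 2 * 2 by norm_num]
    field_simp
    ring
  · ring

end QuadraticRelation

theorem S03_mul_self : S03 * S03 = (2 : ℂ) • S03 - (2 : ℂ) • 1 := by
  ext i j
  fin_cases i <;> fin_cases j <;> simp [S03, Matrix.mul_apply, Fin.sum_univ_four] <;> norm_num

theorem S03_inv_eq : S03⁻¹ = 1 - (2 : ℂ)⁻¹ • S03 :=
  Matrix.inv_eq_right_inv (mul_one_sub_half_smul S03_mul_self)

/-- unitarity `R̂(z⁻¹) R̂(z) = I` of the Baxterized `S03` braid matrix. -/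
theorem s03_baxterized_unitarity (z : ℝ) (hz : 0 < z) :
    S03z z⁻¹ * S03z z = 1 := by
  have hsum : 0 < z ^ 2 + z⁻¹ ^ 2 := by positivity
  have hprod : ((√2 * z⁻¹ : ℝ) : ℂ) * ((√2 * z : ℝ) : ℂ) = 2 := by
    rw [← Complex.ofReal_mul, mul_mul_mul_comm, Real.mul_self_sqrt zero_le_two,
      inv_mul_cancel₀ hz.ne', mul_one, Complex.ofReal_ofNat]
  have hscalar : (√(z ^ 2 + z⁻¹ ^ 2))⁻¹ * (√(z ^ 2 + z⁻¹ ^ 2))⁻¹ *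
      (√2 * z / (√2 * z⁻¹) + √2 * z⁻¹ / (√2 * z)) = 1 := by
    rw [← mul_inv, Real.mul_self_sqrt hsum.le]
    field_simp
  rw [S03z, S03z, inv_inv, add_comm (z⁻¹ ^ 2), smul_mul_smul_comm, S03_inv_eq,
    baxterize_mul_baxterize S03_mul_self hprod, smul_smul]
  convert one_smul ℂ (1 : Matrix (Fin 4) (Fin 4) ℂ)
  exact_mod_cast hscalar
end

section
/- For a complex parameter v define the 4×4 matrix R̂(v) with rows (0,0,0,v), (0,1,0,0), (0,0,1,0), (v,0,0,0). Then for all complex numbers v, v′, v″ (mutually independent) the following braid relation holds: R̂₁₂(v)·R̂₂₃(v′)·R̂₁₂(v″) = R̂₂₃(v″)·R̂₁₂(v′)·R̂₂₃(v). -/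
set_option maxHeartbeats 2000000


open Matrix Kronecker

/-- The Baxterized braid matrix of the exotic case `S14`. -/
noncomputable def RS14 (v : ℂ) : Matrix (Fin 4) (Fin 4) ℂ :=
  !![0, 0, 0, v; 0, 1, 0, 0; 0, 0, 1, 0; v, 0, 0, 0]

/-- the braid relation for `S14` holds for three mutually independent
spectral parameters `v, v', v''`. -/
theorem s14_braid_relation (v v' v'' : ℂ) :
    op12 (RS14 v) * op23 (RS14 v') * op12 (RS14 v'') =
      op23 (RS14 v'') * op12 (RS14 v') * op23 (RS14 v) := by
  ext ⟨a,b,c⟩ ⟨d,e,f⟩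
  fin_cases a <;> fin_cases b <;> fin_cases c <;> fin_cases d <;> fin_cases e <;> fin_cases f <;>
    simp [op12, op23, toT, RS14, enc4, Matrix.mul_apply, Fintype.sum_prod_type,
      Fin.sum_univ_succ, Matrix.one_apply, Equiv.prodAssoc, Matrix.vecHead, Matrix.vecTail] <;> try ring
end

section
/- Let q > 0 be real and define the 9×9 real matrix P₀ by (q + q⁻¹ + 1)·P₀ = q⁻¹·E₁₁⊗E₃₃ + q^{−1/2}·E₁₂⊗E₃₂ + E₁₃⊗E₃₁ + q^{−1/2}·E₂₁⊗E₂₃ + E₂₂⊗E₂₂ + q^{1/2}·E₂₃⊗E₂₁ + E₃₁⊗E₁₃ + q^{1/2}·E₃₂⊗E₁₂ + q·E₃₃⊗E₁₁, where E_{ij} are 3×3 elementary matrices and ⊗ is the Kronecker product. Let M be the 9×9 matrix (using 9×9 elementary matrices Ẽ_{ab}) given by M = (Ẽ₁₃ + q^{1/2}Ẽ₁₅ + qẼ₁₇) + (Ẽ₂₂ − qẼ₂₄) + (Ẽ₃₆ − qẼ₃₈) + (Ẽ₄₃ + sẼ₄₅ − Ẽ₄₇) + Ẽ₅₁ + (Ẽ₆₂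 + q⁻¹Ẽ₆₄) + (Ẽ₇₃ + tẼ₇₅ + q⁻²Ẽ₇₇) + (Ẽ₈₆ + q⁻¹Ẽ₈₈) + Ẽ₉₉, where s = −q^{−1/2}(1−q) and t = −q^{−3/2}(1+q). Then: (a) P₀² = P₀ and trace(P₀) = 1; and (b) M is invertible and M·P₀·M⁻¹ = Ẽ₁₁, i.e. M·P₀·M⁻¹ = diag(1,0,0,0,0,0,0,0,0). -/
open Matrix Kronecker

/-- `3×3` elementary matrix with a single `1` at position `(i,j)`. -/
noncomputable def e3 (i j : Fin 3) : Matrix (Fin 3) (Fin 3) ℝ :=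
  Matrix.single i j 1

/-- The rank-one projector `P₀` of the new class of `SO_q(3)` braid matrices:
`(q + q⁻¹ + 1) P₀ = q⁻¹ E₁₁⊗E₃₃ + q^{-1/2} E₁₂⊗E₃₂ + E₁₃⊗E₃₁ + q^{-1/2} E₂₁⊗E₂₃
 + E₂₂⊗E₂₂ + q^{1/2} E₂₃⊗E₂₁ + E₃₁⊗E₁₃ + q^{1/2} E₃₂⊗E₁₂ + q E₃₃⊗E₁₁`. -/
noncomputable def P0so3 (q : ℝ) : Matrix (Fin 3 × Fin 3) (Fin 3 × Fin 3) ℝ :=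
  (q + q⁻¹ + 1)⁻¹ •
    (q⁻¹ • (e3 0 0 ⊗ₖ e3 2 2) + (Real.sqrt q)⁻¹ • (e3 0 1 ⊗ₖ e3 2 1)
      + e3 0 2 ⊗ₖ e3 2 0
      + (Real.sqrt q)⁻¹ • (e3 1 0 ⊗ₖ e3 1 2) + e3 1 1 ⊗ₖ e3 1 1
      + Real.sqrt q • (e3 1 2 ⊗ₖ e3 1 0)
      + e3 2 0 ⊗ₖ e3 0 2 + Real.sqrt q • (e3 2 1 ⊗ₖ e3 0 1)
      + q • (e3 2 2 ⊗ₖ e3 0 0))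

/-- Row-major decoding `Fin 9 → Fin 3 × Fin 3` (position `3i+j ↦ (i,j)`), identifying
the `9×9` index with the tensor-square index. -/
def dec9 (k : Fin 9) : Fin 3 × Fin 3 :=
  (⟨k.val / 3, by have := k.isLt; omega⟩, ⟨k.val % 3, by have := k.isLt; omega⟩)

/-- The diagonalizer `M` of `P₀`, with `s = -q^{-1/2}(1-q)`, `t = -q^{-3/2}(1+q)`
(rows and columns numbered `1,…,9` in the paper, `0,…,8` here). -/
noncomputable def Mso3 (q : ℝ) : Matrix (Fin 9) (Fin 9) ℝ :=
  (Matrix.single 0 2 1 + Real.sqrt q • Matrix.single 0 4 1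
      + q • Matrix.single 0 6 1)
    + (Matrix.single 1 1 1 - q • Matrix.single 1 3 1)
    + (Matrix.single 2 5 1 - q • Matrix.single 2 7 1)
    + (Matrix.single 3 2 1
      + (-(Real.sqrt q)⁻¹ * (1 - q)) • Matrix.single 3 4 1
      - Matrix.single 3 6 1)
    + Matrix.single 4 0 1
    + (Matrix.single 5 1 1 + q⁻¹ • Matrix.single 5 3 1)
    + (Matrix.single 6 2 1
      + (-((Real.sqrt q)⁻¹ * q⁻¹) * (1 + q)) • Matrix.single 6 4 1
      + (q ^ 2)⁻¹ • Matrix.single 6 6 1)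
    + (Matrix.single 7 5 1 + q⁻¹ • Matrix.single 7 7 1)
    + Matrix.single 8 8 1

/-!
`P₀ = (v ⬝ v)⁻¹ v vᵀ` is the orthogonal projection onto the line of
`v = q^{-1/2} e₁⊗e₃ + e₂⊗e₂ + q^{1/2} e₃⊗e₁`, whence `P₀² = P₀` and `tr P₀ = 1`.
The rows of `M` are nonzero and mutually orthogonal, so `M` is invertible; its first row is
proportional to `v`, so `M v` is proportional to the first basis vector and `M P₀ = Ẽ₁₁ M`.
-/

namespace Matrix

variable {K ι : Type*} [Fintype ι] [Field K]

theorem isIdempotentElem_inv_dotProduct_smul_vecMulVec {w : ι → K} (hw : w ⬝ᵥ w ≠ 0) :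
    IsIdempotentElem ((w ⬝ᵥ w)⁻¹ • vecMulVec w w) := by
  rw [IsIdempotentElem, smul_mul_smul, vecMulVec_mul_vecMulVec, vecMulVec_smul, smul_smul,
    mul_assoc, inv_mul_cancel₀ hw, mul_one]

theorem trace_inv_dotProduct_smul_vecMulVec {w : ι → K} (hw : w ⬝ᵥ w ≠ 0) :
    trace ((w ⬝ᵥ w)⁻¹ • vecMulVec w w) = 1 := by
  rw [trace_smul, trace_vecMulVec, smul_eq_mul, inv_mul_cancel₀ hw]

variable [DecidableEq ι] {M : Matrix ι ι K}

theorem HasOrthogonalRows.mul_transpose_eq_diagonal (h : M.HasOrthogonalRows) :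
    M * Mᵀ = diagonal fun i ↦ M i ⬝ᵥ M i := by
  ext i j
  rcases eq_or_ne i j with rfl | hij
  · simp [mul_apply', diagonal_apply_eq]
  · rw [mul_apply', diagonal_apply_ne _ hij]
    exact h hij

variable [LinearOrder K] [IsStrictOrderedRing K]

theorem HasOrthogonalRows.isUnit (h : M.HasOrthogonalRows) (hM : ∀ i, M i ≠ 0) : IsUnit M := by
  have hdet : IsUnit (M * Mᵀ).det := by
    rw [h.mul_transpose_eq_diagonal, det_diagonal]
    exact isUnit_iff_ne_zero.2 <| Finset.prod_ne_zero_iff.2 fun i _ ↦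
      dotProduct_self_eq_zero.not.2 (hM i)
  rw [det_mul, det_transpose] at hdet
  exact (isUnit_iff_isUnit_det M).2 (isUnit_of_mul_isUnit_left hdet)

theorem HasOrthogonalRows.mul_smul_vecMulVec_mul_inv (h : M.HasOrthogonalRows)
    (hM : ∀ i, M i ≠ 0) {i₀ : ι} {μ : K} {w : ι → K} (hrow : M i₀ = μ • w) :
    M * ((w ⬝ᵥ w)⁻¹ • vecMulVec w w) * M⁻¹ = single i₀ i₀ 1 := by
  have hμ : μ ≠ 0 := by
    rintro rfl
    exact hM i₀ (by rw [hrow, zero_smul])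
  have hw : w ⬝ᵥ w ≠ 0 :=
    dotProduct_self_eq_zero.not.2 fun hw ↦ hM i₀ (by rw [hrow, hw, smul_zero])
  have hMw : M *ᵥ w = Pi.single i₀ (μ * (w ⬝ᵥ w)) := by
    ext i
    rcases eq_or_ne i i₀ with rfl | hi
    · change M i ⬝ᵥ w = _
      rw [hrow, smul_dotProduct, Pi.single_eq_same, smul_eq_mul]
    · have := h hi
      rw [hrow, dotProduct_smul, smul_eq_mul] at this
      simpa [mulVec, hi, hμ] using this
  have hconj : M * ((w ⬝ᵥ w)⁻¹ • vecMulVec w w) = single i₀ i₀ 1 * M := by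
    rw [Matrix.mul_smul, mul_vecMulVec, hMw, single_eq_single_vecMulVec_single, vecMulVec_mul,
      single_vecMul, one_smul, row, hrow]
    ext i j
    rcases eq_or_ne i i₀ with rfl | hi
    · simp only [smul_apply, vecMulVec_apply, Pi.single_eq_same, smul_eq_mul, Pi.smul_apply,
        one_mul]
      field_simp
    · simp [vecMulVec_apply, hi]
  rw [hconj, mul_assoc, mul_nonsing_inv _ ((isUnit_iff_isUnit_det M).1 (h.isUnit hM)), mul_one]

end Matrix

noncomputable def so3Vector (q : ℝ) : Fin 3 × Fin 3 → ℝ :=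
  fun p ↦ !![0, 0, (√q)⁻¹; 0, 1, 0; √q, 0, 0] p.1 p.2

theorem so3Vector_dotProduct_self {q : ℝ} (hq : 0 ≤ q) :
    so3Vector q ⬝ᵥ so3Vector q = q + q⁻¹ + 1 := by
  simp [so3Vector, dotProduct, Fintype.sum_prod_type, Fin.sum_univ_three]
  rw [← mul_inv, Real.mul_self_sqrt hq]
  ring

theorem P0so3_eq_smul_vecMulVec {q : ℝ} (hq : 0 < q) :
    P0so3 q = (so3Vector q ⬝ᵥ so3Vector q)⁻¹ • vecMulVec (so3Vector q) (so3Vector q) := by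
  have hs : √q * √q = q := Real.mul_self_sqrt hq.le
  have hs' : (√q)⁻¹ * (√q)⁻¹ = q⁻¹ := by rw [← mul_inv, hs]
  have hs0 : √q ≠ 0 := (Real.sqrt_pos.2 hq).ne'
  rw [so3Vector_dotProduct_self hq.le, P0so3]
  congr 1
  ext ⟨i, j⟩ ⟨k, l⟩
  fin_cases i <;> fin_cases j <;> fin_cases k <;> fin_cases l <;>
    simp [e3, vecMulVec_apply, so3Vector, hs, hs', hs0]

theorem dec9_bijective : Function.Bijective dec9 := by decide

theorem comp_dec9_dotProduct_comp_dec9 {R : Type*} [NonUnitalNonAssocSemiring R]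
    (x y : Fin 3 × Fin 3 → R) :
    x ∘ dec9 ⬝ᵥ y ∘ dec9 = x ⬝ᵥ y :=
  comp_equiv_dotProduct_comp_equiv x y (Equiv.ofBijective dec9 dec9_bijective)

theorem Mso3_eq (q : ℝ) :
    Mso3 q = !![0, 0, 1, 0, √q, 0, q, 0, 0;
      0, 1, 0, -q, 0, 0, 0, 0, 0;
      0, 0, 0, 0, 0, 1, 0, -q, 0;
      0, 0, 1, 0, -(√q)⁻¹ * (1 - q), 0, -1, 0, 0;
      1, 0, 0, 0, 0, 0, 0, 0, 0;
      0, 1, 0, q⁻¹, 0, 0, 0, 0, 0;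
      0, 0, 1, 0, -((√q)⁻¹ * q⁻¹) * (1 + q), 0, (q ^ 2)⁻¹, 0, 0;
      0, 0, 0, 0, 0, 1, 0, q⁻¹, 0;
      0, 0, 0, 0, 0, 0, 0, 0, 1] := by
  ext i j
  fin_cases i <;> fin_cases j <;> simp [Mso3]

theorem Mso3_row_ne_zero (q : ℝ) (i : Fin 9) : Mso3 q i ≠ 0 := by
  rw [Mso3_eq]
  fin_cases i <;> simp [funext_iff, Fin.forall_fin_succ]

theorem Mso3_row_zero {q : ℝ} (hq : 0 < q) : Mso3 q 0 = √q • (so3Vector q ∘ dec9) := by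
  have hs0 : √q ≠ 0 := (Real.sqrt_pos.2 hq).ne'
  rw [Mso3_eq]
  ext k
  fin_cases k <;> simp [so3Vector, dec9, hs0, Real.mul_self_sqrt hq.le]

theorem Mso3_hasOrthogonalRows {q : ℝ} (hq : 0 < q) : (Mso3 q).HasOrthogonalRows := by
  obtain ⟨a, ha, rfl⟩ : ∃ a, 0 < a ∧ a ^ 2 = q := ⟨√q, Real.sqrt_pos.2 hq, Real.sq_sqrt hq.le⟩
  rw [Mso3_eq, Real.sqrt_sq ha.le]
  intro i j hij
  fin_cases i <;> fin_cases j <;> simp [dotProduct, Fin.sum_univ_succ] at hij ⊢ <;>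
    field_simp <;> ring

/-- `P₀` is a projector of trace `1`, `M` is invertible, and
`M P₀ M⁻¹ = Ẽ₁₁ = diag(1,0,…,0)`. -/
theorem so3_P0_projector_and_diagonalization (q : ℝ) (hq : 0 < q) :
    (P0so3 q * P0so3 q = P0so3 q ∧ Matrix.trace (P0so3 q) = 1) ∧
    IsUnit (Mso3 q) ∧
    Mso3 q * (P0so3 q).submatrix dec9 dec9 * (Mso3 q)⁻¹ =
      Matrix.single 0 0 (1 : ℝ) := by
  have hP := P0so3_eq_smul_vecMulVec hq
  have hv : so3Vector q ⬝ᵥ so3Vector q ≠ 0 := by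
    rw [so3Vector_dotProduct_self hq.le]
    positivity
  have hM := Mso3_hasOrthogonalRows hq
  refine ⟨⟨?_, ?_⟩, hM.isUnit (Mso3_row_ne_zero q), ?_⟩
  · rw [hP]
    exact isIdempotentElem_inv_dotProduct_smul_vecMulVec hv
  · rw [hP]
    exact trace_inv_dotProduct_smul_vecMulVec hv
  · have hsub : (P0so3 q).submatrix dec9 dec9 =
        (so3Vector q ∘ dec9 ⬝ᵥ so3Vector q ∘ dec9)⁻¹ •
          vecMulVec (so3Vector q ∘ dec9) (so3Vector q ∘ dec9) := by
      rw [hP, comp_dec9_dotProduct_comp_dec9]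
      rfl
    rw [hsub]
    exact hM.mul_smul_vecMulVec_mul_inv (Mso3_row_ne_zero q) (Mso3_row_zero hq)
end
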